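/- (Separable decompositions.) Let G be a grid-labelled graph of type (a,b) with m ≥ 1 edges, and let H_1, …, H_n be grid-labelled graphs of type (a,b) with pairwise disjoint edge sets whose union is the edge set of G (a decomposition of G). If the Laplacian L(H_i) is separable for every i, then L(G) is separable (equivalently, ρ(G) = L(G)/(2m) is separable). -/

import Mathlib

open Matrix Kronecker ComplexOrder

/-- The partial transpose of a grid-labelled graph. -/
def PartialTranspose {a b : ℕ} (G : SimpleGraph (Fin a × Fin b)) :
    SimpleGraph (Fin a × Fin b) where
  Adj v w := G.Adj (w.1, v.2) (v.1, w.2)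
  symm := by
    refine ⟨?_⟩
    intro v w h
    exact G.adj_symm h
  loopless := by
    refine ⟨?_⟩
    intro v h
    exact G.irrefl h

instance {a b : ℕ} (G : SimpleGraph (Fin a × Fin b)) [h : DecidableRel G.Adj] :
    DecidableRel (PartialTranspose G).Adj :=
  fun v w => h (w.1, v.2) (v.1, w.2)

/-- Separability of a bipartite density matrix. -/
def MatSeparable {a b : ℕ} (ρ : Matrix (Fin a × Fin b) (Fin a × Fin b) ℂ) : Prop :=
  ∃ (n : ℕ) (A : Fin n → Matrix (Fin a) (Fin a) ℂ) (B : Fin n → Matrix (Fin b) (Fin b) ℂ),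
    (∀ i, (A i).PosSemidef) ∧ (∀ i, (B i).PosSemidef) ∧ ρ = ∑ i, (A i) ⊗ₖ (B i)

/-- The density matrix of a grid-labelled graph: `L(G)/(2m)`. -/
noncomputable def densityMatrix {a b : ℕ} (G : SimpleGraph (Fin a × Fin b))
    [DecidableRel G.Adj] : Matrix (Fin a × Fin b) (Fin a × Fin b) ℂ :=
  ((1 : ℂ) / (2 * (G.edgeFinset.card : ℂ))) • G.lapMatrix ℂ

/-- Degree criterion. -/
def DegreeCriterion {a b : ℕ} (G : SimpleGraph (Fin a × Fin b)) [DecidableRel G.Adj] : Prop :=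
  ∀ v, G.degree v = (PartialTranspose G).degree v

lemma matSep_zero {a b : ℕ} : MatSeparable (0 : Matrix (Fin a × Fin b) (Fin a × Fin b) ℂ) :=
  ⟨0, fun i => i.elim0, fun i => i.elim0, fun i => i.elim0, fun i => i.elim0, by simp⟩

lemma matSep_add {a b : ℕ} {ρ σ : Matrix (Fin a × Fin b) (Fin a × Fin b) ℂ}
    (hρ : MatSeparable ρ) (hσ : MatSeparable σ) : MatSeparable (ρ + σ) := by
  obtain ⟨n₁, A₁, B₁, hA₁, hB₁, h₁⟩ := hρ
  obtain ⟨n₂, A₂, B₂, hA₂, hB₂, h₂⟩ := hσ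
  refine ⟨n₁ + n₂, Fin.addCases A₁ A₂, Fin.addCases B₁ B₂, ?_, ?_, ?_⟩
  · intro i
    induction i using Fin.addCases with
    | left i => simpa using hA₁ i
    | right i => simpa using hA₂ i
  · intro i
    induction i using Fin.addCases with
    | left i => simpa using hB₁ i
    | right i => simpa using hB₂ i
  · rw [h₁, h₂, Fin.sum_univ_add]
    simp

lemma matSep_smul {a b : ℕ} {ρ : Matrix (Fin a × Fin b) (Fin a × Fin b) ℂ}
    (c : ℝ) (hc : 0 ≤ c) (h : MatSeparable ρ) : MatSeparable ((c : ℂ) • ρ) := by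
  obtain ⟨n, A, B, hA, hB, hρ⟩ := h
  refine ⟨n, fun i => (c : ℂ) • A i, B, ?_, hB, ?_⟩
  · intro i
    refine ⟨?_, ?_⟩
    · unfold Matrix.IsHermitian
      rw [conjTranspose_smul, (hA i).1]
      simp
    · intro x
      have h2 := mul_nonneg (show (0:ℂ) ≤ (c:ℂ) by exact_mod_cast hc) ((hA i).2 x)
      simpa [Finsupp.mul_sum, mul_assoc, mul_left_comm] using h2
  · rw [hρ, Finset.smul_sum]
    simp [smul_kronecker]


theorem statement7 {a b : ℕ} (G : SimpleGraph (Fin a × Fin b)) [DecidableRel G.Adj]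
    (hm : 1 ≤ G.edgeFinset.card)
    (n : ℕ) (H : Fin n → SimpleGraph (Fin a × Fin b)) [∀ i, DecidableRel (H i).Adj]
    (hdisj : ∀ i j, i ≠ j → Disjoint (H i).edgeSet (H j).edgeSet)
    (hunion : (⋃ i, (H i).edgeSet) = G.edgeSet)
    (hsep : ∀ i, MatSeparable ((H i).lapMatrix ℂ)) :
    MatSeparable (G.lapMatrix ℂ) ∧ MatSeparable (densityMatrix G) := by
  classical
  -- indicator identity
  have hind : ∀ v w, (if G.Adj v w then (1 : ℂ) else 0)
      = ∑ i, if (H i).Adj v w then (1 : ℂ) else 0 := by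
    intro v w
    by_cases hG : G.Adj v w
    · have : s(v, w) ∈ ⋃ i, (H i).edgeSet := by
        rw [hunion]; exact hG
      obtain ⟨i, hi⟩ := Set.mem_iUnion.mp this
      rw [if_pos hG]
      symm
      calc (∑ j, if (H j).Adj v w then (1 : ℂ) else 0)
          = (if (H i).Adj v w then (1 : ℂ) else 0) := by
            apply Finset.sum_eq_single i
            · intro j _ hji
              rw [if_neg]
              intro hj
              exact Set.disjoint_left.mp (hdisj j i hji) hj hi
            · simp
        _ = 1 := if_pos hi
    · rw [if_neg hG]
      symm
      apply Finset.sum_eq_zero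
      intro i _
      rw [if_neg]
      intro hi
      apply hG
      rw [← SimpleGraph.mem_edgeSet, ← hunion]
      exact Set.mem_iUnion.mpr ⟨i, hi⟩
  have hdegsum : ∀ (G' : SimpleGraph (Fin a × Fin b)) [DecidableRel G'.Adj], ∀ v,
      ((G'.degree v : ℂ)) = ∑ w, if G'.Adj v w then (1 : ℂ) else 0 := by
    intro G' _ v
    rw [← SimpleGraph.card_neighborFinset_eq_degree, SimpleGraph.neighborFinset_eq_filter,
      Finset.card_filter]
    push_cast
    rfl
  have hdeg : ∀ v, ((G.degree v : ℂ)) = ∑ i, ((H i).degree v : ℂ) := by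
    intro v
    rw [hdegsum G v]
    simp_rw [hind, hdegsum]
    rw [Finset.sum_comm]
  have hlap : G.lapMatrix ℂ = ∑ i, (H i).lapMatrix ℂ := by
    ext v w
    rw [Matrix.sum_apply]
    simp only [SimpleGraph.lapMatrix, SimpleGraph.degMatrix, Matrix.sub_apply,
      Matrix.diagonal_apply, SimpleGraph.adjMatrix_apply]
    rw [Finset.sum_sub_distrib]
    congr 1
    · by_cases hvw : v = w
      · subst hvw
        simpa using hdeg v
      · simp [hvw]
    · exact hind v w
  have h1 : MatSeparable (G.lapMatrix ℂ) := by
    rw [hlap]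
    exact Finset.sum_induction _ _ (fun _ _ => matSep_add) matSep_zero
      (fun i _ => hsep i)
  refine ⟨h1, ?_⟩
  have : densityMatrix G
      = (((1 / (2 * (G.edgeFinset.card : ℝ))) : ℝ) : ℂ) • G.lapMatrix ℂ := by
    rw [densityMatrix]
    push_cast
    ring_nf
  rw [this]
  exact matSep_smul _ (by positivity) h1
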